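/- arXiv:1203.0190 — 4 statements merged into one kernel-verified Lean document; each statement's English description precedes it below -/
import Mathlib

section
/- Let g : [x₀,∞) → ℝ be an increasing, absolutely continuous function with lim_{x→∞} g(x) = ∞, and let δ > 0. Then the set E = { x ≥ x₀ : g is differentiable at x and g'(x) > g(x)^{1+δ} } has finite Lebesgue measure. -/
/-!
Cut `[x₁, ∞)`, where `g ≥ 1`, into the dyadic levels `2ⁿ ≤ g < 2ⁿ⁺¹`. On the `n`-th level
`g' > 2^{n(1+δ)}` on `E`, while `∫ g'` over the sublevel set `{g < 2ⁿ⁺¹}` is at most `2ⁿ⁺¹`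
(it is an interval `[x₁, b]` with `g b = 2ⁿ⁺¹`, by continuity). Markov's inequality bounds the
measure of the `n`-th piece of `E` by `2 · 2^{-nδ}`, which is summable.
-/

open MeasureTheory Set Filter

section

variable {g : ℝ → ℝ} {a b : ℝ}

theorem MonotoneOn.deriv_nonneg_of_mem_nhds {s : Set ℝ} {x : ℝ} (hg : MonotoneOn g s)
    (hs : s ∈ nhds x) : 0 ≤ deriv g x :=
  (derivWithin_of_mem_nhds (f := g) hs) ▸ hg.derivWithin_nonneg

/- If `deriv g` were not integrable, the integral would be the junk value `0`, so `g` would be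
constant on `[a, b]` and `deriv g = 0` on `(a, b)`, which is integrable. -/
theorem intervalIntegrable_deriv_of_monotoneOn (hab : a ≤ b) (hg : MonotoneOn g (Icc a b))
    (hFTC : g b - g a = ∫ x in a..b, deriv g x) : IntervalIntegrable (deriv g) volume a b := by
  by_contra hint
  have hconst : ∀ x ∈ Icc a b, g x = g a := by
    intro x hx
    have hgx := hg ⟨le_rfl, hab⟩ hx hx.1
    have hxg := hg hx ⟨hab, le_rfl⟩ hx.2
    rw [intervalIntegral.integral_undef hint] at hFTC
    linarith
  have hderiv : EqOn (deriv g) 0 (Ioo a b) := fun x hx => by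
    have hloc : g =ᶠ[nhds x] fun _ => g a :=
      Filter.eventually_of_mem (Ioo_mem_nhds hx.1 hx.2) fun y hy => hconst y (Ioo_subset_Icc_self hy)
    simp [hloc.deriv_eq]
  apply hint
  rw [intervalIntegrable_iff_integrableOn_Ioo_of_le hab]
  exact integrableOn_zero.congr_fun hderiv.symm measurableSet_Ioo

theorem continuousOn_Icc_of_eq_integral_deriv (hab : a ≤ b)
    (hint : IntervalIntegrable (deriv g) volume a b)
    (hFTC : ∀ y ∈ Icc a b, g y - g a = ∫ x in a..y, deriv g x) : ContinuousOn g (Icc a b) := by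
  have hprim := (intervalIntegral.continuousOn_primitive_interval' hint left_mem_uIcc).const_add
    (g a)
  rw [uIcc_of_le hab] at hprim
  exact hprim.congr fun y hy => by linarith [hFTC y hy]

theorem volume_setOf_le_deriv_le (hab : a ≤ b) (hg : MonotoneOn g (Icc a b))
    (hFTC : g b - g a = ∫ x in a..b, deriv g x) {c : ℝ} (hc : 0 < c) :
    volume {x | x ∈ Icc a b ∧ c ≤ deriv g x} ≤ ENNReal.ofReal ((g b - g a) / c) := by
  have hint : IntegrableOn (deriv g) (Icc a b) :=
    (intervalIntegrable_iff_integrableOn_Icc_of_le hab).1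
      (intervalIntegrable_deriv_of_monotoneOn hab hg hFTC)
  have hnonneg : 0 ≤ᵐ[volume.restrict (Icc a b)] deriv g := by
    rw [← Measure.restrict_congr_set Ioo_ae_eq_Icc]
    filter_upwards [ae_restrict_mem measurableSet_Ioo] with x hx
    exact hg.deriv_nonneg_of_mem_nhds (Icc_mem_nhds hx.1 hx.2)
  have hintegral : ∫ x in Icc a b, deriv g x = g b - g a := by
    rw [integral_Icc_eq_integral_Ioc, ← intervalIntegral.integral_of_le hab, hFTC]
  have hmarkov := mul_meas_ge_le_lintegral₀ (μ := volume.restrict (Icc a b))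
    (measurable_deriv g).ennreal_ofReal.aemeasurable (ENNReal.ofReal c)
  rw [← ofReal_integral_eq_lintegral_ofReal hint hnonneg, hintegral,
    Measure.restrict_apply' measurableSet_Icc] at hmarkov
  rw [ENNReal.ofReal_div_of_pos hc, ENNReal.le_div_iff_mul_le (by simp [hc]) (by simp), mul_comm]
  refine le_trans (mul_le_mul_right (measure_mono fun x hx => ?_) _) hmarkov
  exact ⟨ENNReal.ofReal_le_ofReal hx.2, hx.1⟩

theorem volume_setOf_lt_le_deriv_le (hg : MonotoneOn g (Ici a))
    (hFTC : ∀ u v, a ≤ u → u ≤ v → g v - g u = ∫ x in u..v, deriv g x)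
    (htop : Tendsto g atTop atTop) (ha : 0 ≤ g a) {T c : ℝ} (hc : 0 < c) :
    volume {x | a ≤ x ∧ g x < T ∧ c ≤ deriv g x} ≤ ENNReal.ofReal (T / c) := by
  rcases lt_or_ge T (g a) with hTa | hTa
  · have hempty : {x | a ≤ x ∧ g x < T ∧ c ≤ deriv g x} = ∅ :=
      eq_empty_of_forall_notMem fun x ⟨hax, hxT, _⟩ =>
        (hxT.trans hTa).not_ge (hg self_mem_Ici hax hax)
    simp [hempty]
  obtain ⟨d, hTd, had⟩ := ((htop.eventually_ge_atTop T).and (eventually_ge_atTop a)).exists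
  have hcont : ContinuousOn g (Icc a d) :=
    continuousOn_Icc_of_eq_integral_deriv had
      (intervalIntegrable_deriv_of_monotoneOn had (hg.mono Icc_subset_Ici_self) (hFTC a d le_rfl had))
      fun y hy => hFTC a y le_rfl hy.1
  obtain ⟨b, hb, hgb⟩ := intermediate_value_Icc had hcont ⟨hTa, hTd⟩
  calc volume {x | a ≤ x ∧ g x < T ∧ c ≤ deriv g x}
      ≤ volume {x | x ∈ Icc a b ∧ c ≤ deriv g x} := by
        refine measure_mono fun x ⟨hax, hxT, hcx⟩ => ⟨⟨hax, le_of_not_gt fun hbx => ?_⟩, hcx⟩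
        exact hxT.not_ge (hgb ▸ hg hb.1 hax hbx.le)
    _ ≤ ENNReal.ofReal ((g b - g a) / c) :=
        volume_setOf_le_deriv_le hb.1 (hg.mono Icc_subset_Ici_self) (hFTC a b le_rfl hb.1) hc
    _ ≤ ENNReal.ofReal (T / c) :=
        ENNReal.ofReal_le_ofReal (div_le_div_of_nonneg_right (by linarith) hc.le)

end

theorem two_pow_succ_div_rpow (n : ℕ) (δ : ℝ) :
    (2 : ℝ) ^ (n + 1) / ((2 : ℝ) ^ n) ^ (1 + δ) = 2 * ((2 : ℝ) ^ δ)⁻¹ ^ n := by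
  rw [Real.rpow_add (by positivity), Real.rpow_one, ← Real.rpow_natCast_mul zero_le_two,
    mul_comm (n : ℝ), Real.rpow_mul_natCast zero_le_two, inv_pow, pow_succ]
  field_simp

/-- Growth lemma: if `g` is increasing and absolutely continuous on `[x₀,∞)` with
`g(x) → ∞`, and `δ > 0`, then the set where `g'(x) > g(x)^{1+δ}` has finite measure. -/
theorem stmt3 (x₀ δ : ℝ) (hδ : 0 < δ) (g : ℝ → ℝ)
    (hmono : MonotoneOn g (Set.Ici x₀))
    (htop : Tendsto g atTop atTop)
    (hAC : ∀ a b : ℝ, x₀ ≤ a → a ≤ b → g b - g a = ∫ x in a..b, deriv g x) :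
    volume {x : ℝ | x₀ ≤ x ∧ DifferentiableAt ℝ g x ∧ g x ^ (1 + δ) < deriv g x} < ⊤ := by
  obtain ⟨x₁, hgx₁, hx₀x₁⟩ := ((htop.eventually_ge_atTop 1).and (eventually_ge_atTop x₀)).exists
  set r := ((2 : ℝ) ^ δ)⁻¹
  set level : ℕ → Set ℝ :=
    fun n => {x | x₁ ≤ x ∧ g x < 2 ^ (n + 1) ∧ ((2 : ℝ) ^ n) ^ (1 + δ) ≤ deriv g x}
  have hlevel : ∀ n, volume (level n) ≤ ENNReal.ofReal (2 * r ^ n) := fun n => by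
    rw [← two_pow_succ_div_rpow]
    exact volume_setOf_lt_le_deriv_le (hmono.mono (Ici_subset_Ici.2 hx₀x₁))
      (fun u v hu => hAC u v (hx₀x₁.trans hu)) htop (by linarith) (by positivity)
  have hcover : {x : ℝ | x₀ ≤ x ∧ DifferentiableAt ℝ g x ∧ g x ^ (1 + δ) < deriv g x}
      ⊆ Icc x₀ x₁ ∪ ⋃ n, level n := by
    rintro x ⟨hx₀x, -, hderiv⟩
    rcases le_total x x₁ with hxx₁ | hx₁x
    · exact Or.inl ⟨hx₀x, hxx₁⟩
    obtain ⟨n, hn, hn'⟩ := exists_nat_pow_near (hgx₁.trans (hmono hx₀x₁ hx₀x hx₁x)) one_lt_two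
    refine Or.inr (mem_iUnion.2 ⟨n, hx₁x, hn', ?_⟩)
    exact (Real.rpow_le_rpow (by positivity) hn (by positivity)).trans hderiv.le
  have hsum : Summable fun n : ℕ => 2 * r ^ n :=
    (summable_geometric_of_lt_one (by positivity)
      (inv_lt_one_of_one_lt₀ (Real.one_lt_rpow one_lt_two hδ))).mul_left 2
  calc _ ≤ volume (Icc x₀ x₁) + ∑' n, ENNReal.ofReal (2 * r ^ n) :=
        (measure_mono hcover).trans <| (measure_union_le _ _).trans <|
          add_le_add_right ((measure_iUnion_le _).trans (ENNReal.tsum_le_tsum hlevel)) _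
    _ = volume (Icc x₀ x₁) + ENNReal.ofReal (∑' n, 2 * r ^ n) := by
        rw [ENNReal.ofReal_tsum_of_nonneg (fun n => by positivity) hsum]
    _ < ⊤ := ENNReal.add_lt_top.2 ⟨measure_Icc_lt_top, ENNReal.ofReal_lt_top⟩
end

section
/- Let α : [x₀,∞) → (0,∞) be decreasing and continuous, and let β : (0,1] → (0,∞) be increasing and continuous. Then there exists a decreasing, continuous function φ : [x₀,∞) → (0,1] such that φ(x + α(x)) ≤ β(φ(x)) for all sufficiently large x. -/
/-!
Iterating `t ↦ min t (β t)` from `1` gives a decreasing sequence `dₙ` in `(0,1]` with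
`dₙ₊₁ ≤ β dₙ`; averaging the staircase `t ↦ d⌊t⌋` over unit windows gives a continuous decreasing
`ψ` with `ψ (s + 2) ≤ β (ψ s)` for `s ≥ 0`. The time change `N x = ∫_{x₀}^x 2 / α` satisfies
`N (x + α x) ≥ N x + 2` because `α` decreases, so `φ = ψ ∘ N` works.
-/

open Set MeasureTheory intervalIntegral

section IntervalIntegralBounds

variable {f : ℝ → ℝ} {a b : ℝ}

theorem Monotone.mul_sub_le_intervalIntegral (hf : Monotone f) (hab : a ≤ b) :
    f a * (b - a) ≤ ∫ t in a..b, f t := by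
  have h := integral_mono_on (μ := volume) hab intervalIntegrable_const
    hf.intervalIntegrable fun t ht => hf ht.1
  rwa [intervalIntegral.integral_const, smul_eq_mul, mul_comm] at h

theorem Antitone.mul_sub_le_intervalIntegral (hf : Antitone f) (hab : a ≤ b) :
    f b * (b - a) ≤ ∫ t in a..b, f t := by
  have h := integral_mono_on (μ := volume) hab intervalIntegrable_const
    hf.intervalIntegrable fun t ht => hf ht.2
  rwa [intervalIntegral.integral_const, smul_eq_mul, mul_comm] at h

theorem Antitone.intervalIntegral_le_mul_sub (hf : Antitone f) (hab : a ≤ b) :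
    ∫ t in a..b, f t ≤ f a * (b - a) := by
  have h := integral_mono_on (μ := volume) hab hf.intervalIntegrable
    intervalIntegrable_const fun t ht => hf ht.1
  rwa [intervalIntegral.integral_const, smul_eq_mul, mul_comm] at h

theorem Antitone.continuous_integral_unitWindow (hf : Antitone f) :
    Continuous fun s => ∫ t in s..s + 1, f t := by
  have hP := continuous_primitive (μ := volume) (fun _ _ => hf.intervalIntegrable) 0
  refine ((hP.comp (continuous_add_const 1)).sub hP).congr fun s => ?_
  exact integral_interval_sub_left hf.intervalIntegrable hf.intervalIntegrable

theorem Antitone.antitone_integral_unitWindow (hf : Antitone f) :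
    Antitone fun s => ∫ t in s..s + 1, f t := by
  intro s s' hss'
  have shift : ∀ r, ∫ t in r..r + 1, f t = ∫ u in (0 : ℝ)..1, f (u + r) := fun r => by
    rw [integral_comp_add_right, zero_add, add_comm 1 r]
  simp only [shift]
  exact integral_mono_on zero_le_one
    (hf.comp_monotone (monotone_id.add_const s')).intervalIntegrable
    (hf.comp_monotone (monotone_id.add_const s)).intervalIntegrable
    fun u _ => hf (add_le_add_right hss' u)

end IntervalIntegralBounds

section Staircase

variable {β : ℝ → ℝ}

noncomputable def minOrbit (β : ℝ → ℝ) : ℕ → ℝ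
  | 0 => 1
  | n + 1 => min (minOrbit β n) (β (minOrbit β n))

theorem minOrbit_mem_Ioc (hβpos : ∀ t ∈ Ioc (0 : ℝ) 1, 0 < β t) :
    ∀ n, minOrbit β n ∈ Ioc (0 : ℝ) 1
  | 0 => ⟨one_pos, le_rfl⟩
  | n + 1 =>
    have h := minOrbit_mem_Ioc hβpos n
    ⟨lt_min h.1 (hβpos _ h), (min_le_left _ _).trans h.2⟩

theorem minOrbit_antitone : Antitone (minOrbit β) :=
  antitone_nat_of_succ_le fun _ => min_le_left _ _

theorem minOrbit_succ_le (n : ℕ) : minOrbit β (n + 1) ≤ β (minOrbit β n) := min_le_right _ _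

theorem antitone_minOrbit_floor : Antitone fun t : ℝ => minOrbit β ⌊t⌋₊ :=
  minOrbit_antitone.comp_monotone Nat.floor_mono

theorem exists_antitone_continuous_comp_add_two_le
    (hβpos : ∀ t ∈ Ioc (0 : ℝ) 1, 0 < β t) (hβmono : MonotoneOn β (Ioc (0 : ℝ) 1)) :
    ∃ ψ : ℝ → ℝ, Antitone ψ ∧ Continuous ψ ∧ (∀ s, ψ s ∈ Ioc (0 : ℝ) 1) ∧
      ∀ s ≥ 0, ψ (s + 2) ≤ β (ψ s) := by
  set D : ℝ → ℝ := fun t => minOrbit β ⌊t⌋₊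
  have hD : Antitone D := antitone_minOrbit_floor
  have lower (s : ℝ) : D (s + 1) ≤ ∫ t in s..s + 1, D t := by
    simpa using hD.mul_sub_le_intervalIntegral (le_add_of_nonneg_right zero_le_one)
  have upper (s : ℝ) : ∫ t in s..s + 1, D t ≤ D s := by
    simpa using hD.intervalIntegral_le_mul_sub (le_add_of_nonneg_right zero_le_one)
  have hD_succ {t : ℝ} (ht : 0 ≤ t) : D (t + 1) ≤ β (D t) := by
    simp only [D, Nat.floor_add_one ht]
    exact minOrbit_succ_le _
  have hψ_mem (s : ℝ) : ∫ t in s..s + 1, D t ∈ Ioc (0 : ℝ) 1 :=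
    ⟨(minOrbit_mem_Ioc hβpos _).1.trans_le (lower s),
      (upper s).trans (minOrbit_mem_Ioc hβpos _).2⟩
  refine ⟨fun s => ∫ t in s..s + 1, D t, hD.antitone_integral_unitWindow,
    hD.continuous_integral_unitWindow, hψ_mem, fun s hs => ?_⟩
  calc ∫ t in s + 2..s + 2 + 1, D t ≤ D (s + 2) := upper _
    _ = D (s + 1 + 1) := by rw [add_assoc, one_add_one_eq_two]
    _ ≤ β (D (s + 1)) := hD_succ (by linarith)
    _ ≤ β (∫ t in s..s + 1, D t) := hβmono (minOrbit_mem_Ioc hβpos _) (hψ_mem s) (lower s)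

end Staircase

theorem exists_monotone_continuous_add_le_comp_add {x₀ c : ℝ} {α : ℝ → ℝ}
    (hαpos : ∀ x ∈ Ici x₀, 0 < α x) (hαanti : AntitoneOn α (Ici x₀)) (hc : 0 ≤ c) :
    ∃ N : ℝ → ℝ, Monotone N ∧ Continuous N ∧ N x₀ = 0 ∧ ∀ x ≥ x₀, N x + c ≤ N (x + α x) := by
  set g : ℝ → ℝ := fun t => c / α (max t x₀)
  have hg : Monotone g := fun a b hab =>
    div_le_div_of_nonneg_left hc (hαpos _ (le_max_right b x₀))
      (hαanti (le_max_right a x₀) (le_max_right b x₀) (max_le_max_right x₀ hab))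
  have hg_int (a b : ℝ) : IntervalIntegrable g volume a b := hg.intervalIntegrable
  have increment (a b : ℝ) : (∫ t in x₀..b, g t) - ∫ t in x₀..a, g t = ∫ t in a..b, g t :=
    integral_interval_sub_left (hg_int _ _) (hg_int _ _)
  have hg_nonneg (t : ℝ) : 0 ≤ g t := div_nonneg hc (hαpos _ (le_max_right t x₀)).le
  refine ⟨fun x => ∫ t in x₀..x, g t, fun a b hab => ?_, continuous_primitive hg_int x₀,
    integral_same, fun x hx => ?_⟩
  · have h := hg.mul_sub_le_intervalIntegral hab
    have h_nonneg := mul_nonneg (hg_nonneg a) (sub_nonneg.2 hab)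
    linarith [increment a b]
  · have hαx := hαpos x hx
    have key : g x * (x + α x - x) = c := by
      simp only [g, max_eq_left hx, add_sub_cancel_left]
      exact div_mul_cancel₀ c hαx.ne'
    have h := hg.mul_sub_le_intervalIntegral (le_add_of_nonneg_right (a := x) hαx.le)
    linarith [increment x (x + α x)]

theorem stmt4_general (x₀ : ℝ) (α β : ℝ → ℝ)
    (hαpos : ∀ x ∈ Set.Ici x₀, 0 < α x)
    (hαanti : AntitoneOn α (Set.Ici x₀))
    (hβpos : ∀ t ∈ Set.Ioc (0:ℝ) 1, 0 < β t)
    (hβmono : MonotoneOn β (Set.Ioc (0:ℝ) 1)) :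
    ∃ φ : ℝ → ℝ, AntitoneOn φ (Set.Ici x₀) ∧ ContinuousOn φ (Set.Ici x₀) ∧
      (∀ x ∈ Set.Ici x₀, φ x ∈ Set.Ioc (0:ℝ) 1) ∧
      ∃ x₁ : ℝ, ∀ x ≥ x₁, φ (x + α x) ≤ β (φ x) := by
  obtain ⟨ψ, hψanti, hψcont, hψmem, hψstep⟩ :=
    exists_antitone_continuous_comp_add_two_le hβpos hβmono
  obtain ⟨N, hNmono, hNcont, hN₀, hNstep⟩ :=
    exists_monotone_continuous_add_le_comp_add hαpos hαanti zero_le_two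
  refine ⟨ψ ∘ N, (hψanti.comp_monotone hNmono).antitoneOn _,
    (hψcont.comp hNcont).continuousOn, fun x _ => hψmem (N x), x₀, fun x hx => ?_⟩
  have hN_nonneg : 0 ≤ N x := hN₀ ▸ hNmono hx
  calc ψ (N (x + α x)) ≤ ψ (N x + 2) := hψanti (hNstep x hx)
    _ ≤ β (ψ (N x)) := hψstep _ hN_nonneg

/-- Given `α : [x₀,∞) → (0,∞)` decreasing continuous and `β : (0,1] → (0,∞)` increasing
continuous, there is a decreasing continuous `φ : [x₀,∞) → (0,1]` with
`φ(x + α(x)) ≤ β(φ(x))` for all large `x`. -/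
theorem stmt4 (x₀ : ℝ) (α β : ℝ → ℝ)
    (hαpos : ∀ x ∈ Set.Ici x₀, 0 < α x)
    (hαanti : AntitoneOn α (Set.Ici x₀))
    (hαcont : ContinuousOn α (Set.Ici x₀))
    (hβpos : ∀ t ∈ Set.Ioc (0:ℝ) 1, 0 < β t)
    (hβmono : MonotoneOn β (Set.Ioc (0:ℝ) 1))
    (hβcont : ContinuousOn β (Set.Ioc (0:ℝ) 1)) :
    ∃ φ : ℝ → ℝ, AntitoneOn φ (Set.Ici x₀) ∧ ContinuousOn φ (Set.Ici x₀) ∧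
      (∀ x ∈ Set.Ici x₀, φ x ∈ Set.Ioc (0:ℝ) 1) ∧
      ∃ x₁ : ℝ, ∀ x ≥ x₁, φ (x + α x) ≤ β (φ x) :=
  stmt4_general x₀ α β hαpos hαanti hβpos hβmono
end

section
/- Let K ⊆ ℝⁿ be bounded and r : K → (0,∞). Then there exists an at most countable subset L ⊆ K such that K ⊆ ⋃_{x∈L} B(x,r(x)) and no point of ℝⁿ is contained in more than 4^{2n} of the balls B(x,r(x)) for x ∈ L. -/
open Set Metric

/-!
Mathlib's Besicovitch covering theorem splits any family of balls with bounded radii into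
`multiplicity E` subfamilies of pairwise disjoint balls that together cover the centres. A point
lies in at most one ball of each disjoint subfamily, and disjoint open balls in a separable space
are countably many. Since `multiplicity E ≤ 5 ^ dim E ≤ 4 ^ (2 * dim E)`, this gives the theorem once
the radii are bounded; if some radius exceeds the diameter of `K`, that single ball already
covers `K`.
-/

theorem Set.encard_sep_iUnion_le_card_of_pairwiseDisjoint {α β ι : Type*} [Fintype ι]
    {s : ι → Set α} {B : α → Set β} (hs : ∀ i, (s i).PairwiseDisjoint B) (y : β) :
    {x ∈ ⋃ i, s i | y ∈ B x}.encard ≤ Fintype.card ι := by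
  have hsub : ∀ i, {x ∈ s i | y ∈ B x}.encard ≤ 1 := fun i =>
    encard_le_one_iff.2 fun a b ha hb =>
      (hs i).elim ha.1 hb.1 (not_disjoint_iff.2 ⟨y, ha.2, hb.2⟩)
  calc {x ∈ ⋃ i, s i | y ∈ B x}.encard = (⋃ i, {x ∈ s i | y ∈ B x}).encard := by
        congr 1; ext x; simp
    _ ≤ ∑ i, {x ∈ s i | y ∈ B x}.encard := encard_iUnion_le_of_fintype _
    _ ≤ ∑ _i : ι, 1 := Finset.sum_le_sum fun i _ => hsub i
    _ = Fintype.card ι := by simp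

namespace Besicovitch

theorem exists_countable_ball_cover_encard_le_of_bddAbove {α : Type*} [MetricSpace α]
    [SecondCountableTopology α] {N : ℕ} {τ : ℝ} (hτ : 1 < τ) (hN : IsEmpty (SatelliteConfig α N τ))
    {K : Set α} {r : α → ℝ} {R : ℝ} (hr : ∀ x ∈ K, 0 < r x) (hR : ∀ x ∈ K, r x ≤ R) :
    ∃ L ⊆ K, L.Countable ∧ (K ⊆ ⋃ x ∈ L, ball x (r x)) ∧
      ∀ y, {x ∈ L | y ∈ ball x (r x)}.encard ≤ N := by
  let q : BallPackage K α :=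
    { c := (↑), r := fun x => r x, rpos := fun x => hr x x.2, r_bound := R,
      r_le := fun x => hR x x.2 }
  obtain ⟨s, hdisj, hcov⟩ := exist_disjoint_covering_families hτ hN q
  have hdisj' : ∀ i, (Subtype.val '' s i).PairwiseDisjoint fun x => ball x (r x) := fun i =>
    (Subtype.val_injective.injOn.pairwiseDisjoint_image).2 <|
      (hdisj i).mono fun _ => ball_subset_closedBall
  refine ⟨⋃ i, Subtype.val '' s i, iUnion_subset fun i => Subtype.coe_image_subset _ _,
    countable_iUnion fun i => (hdisj' i).countable_of_isOpen (fun _ _ => isOpen_ball)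
      fun x hx => ⟨x, mem_ball_self (hr x (Subtype.coe_image_subset _ _ hx))⟩, ?_,
    fun y => by simpa using encard_sep_iUnion_le_card_of_pairwiseDisjoint hdisj' y⟩
  intro x hx
  obtain ⟨i, j, hj, hxj⟩ : ∃ i, ∃ j ∈ s i, x ∈ ball (j : α) (r j) := by
    simpa [q] using hcov ⟨⟨x, hx⟩, rfl⟩
  exact mem_biUnion (mem_iUnion.2 ⟨i, mem_image_of_mem _ hj⟩) hxj

variable {E : Type*} [NormedAddCommGroup E] [NormedSpace ℝ E] [FiniteDimensional ℝ E]

theorem one_le_multiplicity : 1 ≤ multiplicity E := by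
  simpa using card_le_multiplicity (s := {(0 : E)}) (by simp) (by simp)

theorem exists_countable_ball_cover_encard_le_multiplicity {K : Set E}
    (hK : Bornology.IsBounded K) {r : E → ℝ} (hr : ∀ x ∈ K, 0 < r x) :
    ∃ L ⊆ K, L.Countable ∧ (K ⊆ ⋃ x ∈ L, ball x (r x)) ∧
      ∀ y, {x ∈ L | y ∈ ball x (r x)}.encard ≤ multiplicity E := by
  obtain ⟨C, hC⟩ := isBounded_iff.1 hK
  by_cases hbig : ∃ x ∈ K, C < r x
  · obtain ⟨x, hxK, hx⟩ := hbig
    refine ⟨{x}, singleton_subset_iff.2 hxK, countable_singleton x,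
      fun z hz => mem_biUnion rfl ((hC hz hxK).trans_lt hx), fun y => ?_⟩
    calc {z ∈ ({x} : Set E) | y ∈ ball z (r z)}.encard ≤ ({x} : Set E).encard :=
          encard_le_encard (sep_subset _ _)
      _ ≤ multiplicity E := by simpa using one_le_multiplicity
  · push Not at hbig
    exact exists_countable_ball_cover_encard_le_of_bddAbove (one_lt_goodτ E)
      (isEmpty_satelliteConfig_multiplicity E) hr hbig

theorem multiplicity_euclideanSpace_le (n : ℕ) :
    multiplicity (EuclideanSpace ℝ (Fin n)) ≤ 4 ^ (2 * n) :=
  calc multiplicity (EuclideanSpace ℝ (Fin n)) ≤ 5 ^ n := by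
        simpa using multiplicity_le (E := EuclideanSpace ℝ (Fin n))
    _ ≤ 16 ^ n := Nat.pow_le_pow_left (by norm_num) n
    _ = 4 ^ (2 * n) := by rw [pow_mul]; norm_num

end Besicovitch

/-- Besicovich covering lemma with multiplicity constant `4^{2n}`: for a bounded `K ⊆ ℝⁿ`
and a radius function `r : K → (0,∞)` there is an at most countable `L ⊆ K` with
`K ⊆ ⋃_{x∈L} B(x,r(x))` such that no point lies in more than `4^{2n}` of these balls. -/
theorem stmt6 (n : ℕ) (K : Set (EuclideanSpace ℝ (Fin n))) (hK : Bornology.IsBounded K)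
    (r : EuclideanSpace ℝ (Fin n) → ℝ) (hr : ∀ x ∈ K, 0 < r x) :
    ∃ L ⊆ K, L.Countable ∧ (K ⊆ ⋃ x ∈ L, Metric.ball x (r x)) ∧
      ∀ y : EuclideanSpace ℝ (Fin n),
        ({x ∈ L | y ∈ Metric.ball x (r x)}).encard ≤ 4 ^ (2 * n) := by
  obtain ⟨L, hLK, hLc, hcov, hmult⟩ :=
    Besicovitch.exists_countable_ball_cover_encard_le_multiplicity hK hr
  refine ⟨L, hLK, hLc, hcov, fun y => (hmult y).trans ?_⟩
  exact_mod_cast Besicovitch.multiplicity_euclideanSpace_le n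
end

section
/- Let D ⊆ ℂ be compact and let T₁,…,T_m : D → D be contractions such that T_i(D) ∩ T_j(D) = ∅ for i ≠ j, and suppose that for each i there is b_i ∈ (0,1) with |T_i(z) − T_i(w)| ≥ b_i|z − w| for all z,w ∈ D. Define s > 0 by Σ_{i=1}^m b_i^s = 1. Then the limit set X of the iterated function scheme {T₁,…,T_m} satisfies dim X ≥ s, where dim denotes Hausdorff dimension. -/
/-!
Code points of `X` by addresses `ω : ℕ → ι`, `ω ↦ lim T (ω 0) ∘ ⋯ ∘ T (ω (n - 1)) x₀`, and push the
Bernoulli measure with weights `b i ^ s` forward to `X`. The first-level pieces `T i X` are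
`δ`-separated for some `δ > 0`; by the lower bounds `b i` two points whose addresses first differ
at position `k` are then at distance at least `δ ∏_{j<k} b (ω j)`. Hence a set of diameter at most
`δ r` only meets points whose addresses share the prefix of length `n`, where `n` is the first
time `∏_{j<n} b (ω j) ≤ r`, and so it has measure at most `r ^ s`. The mass distribution
principle then gives `μH[s] X > 0`.
-/

open MeasureTheory Set Metric Filter Function Topology PiNat
open scoped ENNReal NNReal

lemma exists_nnreal_lt_one_forall_le {ι : Type*} [Finite ι] {f : ι → ℝ} (hf : ∀ i, f i < 1) :
    ∃ c : ℝ≥0, c < 1 ∧ ∀ i, f i ≤ c := by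
  have hev : ∀ᶠ c in 𝓝[<] (1 : ℝ), 0 ≤ c ∧ ∀ i, f i ≤ c :=
    nhdsWithin_le_nhds <| ((eventually_gt_nhds one_pos).mono fun _ h => h.le).and <|
      eventually_all.2 fun i => (eventually_gt_nhds (hf i)).mono fun _ h => h.le
  obtain ⟨c, ⟨hc0, hfc⟩, hc1⟩ := (hev.and self_mem_nhdsWithin).exists
  exact ⟨⟨c, hc0⟩, hc1, hfc⟩

lemma exists_pos_forall_le_dist_of_pairwise_disjoint {ι α : Type*} [Finite ι] [MetricSpace α]
    {K : ι → Set α} (hK : ∀ i, IsCompact (K i)) (hd : Pairwise (Disjoint on K)) :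
    ∃ δ > 0, ∀ i j, i ≠ j → ∀ x ∈ K i, ∀ y ∈ K j, δ ≤ dist x y := by
  have hev : ∀ᶠ δ in 𝓝[>] (0 : ℝ), ∀ i j, i ≠ j → ∀ x ∈ K i, ∀ y ∈ K j, δ ≤ dist x y := by
    refine eventually_all.2 fun i => eventually_all.2 fun j => ?_
    by_cases hij : i = j
    · exact Eventually.of_forall fun _ h => absurd hij h
    obtain ⟨r, hr, hrK⟩ := exists_pos_forall_lt_edist (hK i) (hK j).isClosed (hd hij)
    filter_upwards [nhdsWithin_le_nhds (eventually_lt_nhds (NNReal.coe_pos.2 hr))]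
      with δ hδ _ x hx y hy
    have hrxy := hrK x hx y hy
    rw [edist_nndist, ENNReal.coe_lt_coe] at hrxy
    exact (hδ.trans hrxy).le
  exact (hev.and self_mem_nhdsWithin).exists.imp fun δ h => ⟨h.2, h.1⟩

section MassDistribution

variable {E : Type*} [MetricSpace E] [MeasurableSpace E]

lemma measure_le_ediam_rpow {μ : Measure E} {s : ℝ} (hs : 0 < s)
    (h : ∀ V, IsClosed V → ∀ ρ > 0, (∀ x ∈ V, ∀ y ∈ V, dist x y ≤ ρ) → μ V ≤ ENNReal.ofReal ρ ^ s)
    (t : Set E) : μ t ≤ ediam t ^ s := by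
  rcases eq_top_or_lt_top (ediam t) with ht | ht
  · simp [ht, ENNReal.top_rpow_of_pos hs]
  have hbdd : Bornology.IsBounded t := isBounded_iff_ediam_ne_top.2 ht.ne
  rw [← ENNReal.ofReal_toReal ht.ne]
  have hcont : Tendsto (fun ρ => ENNReal.ofReal ρ ^ s) (𝓝[>] (diam t))
      (𝓝 (ENNReal.ofReal (diam t) ^ s)) :=
    ((ENNReal.continuous_rpow_const.comp ENNReal.continuous_ofReal).tendsto _).mono_left
      nhdsWithin_le_nhds
  refine ge_of_tendsto hcont (eventually_nhdsWithin_of_forall fun ρ (hρ : diam t < ρ) => ?_)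
  calc μ t ≤ μ (closure t) := measure_mono subset_closure
    _ ≤ ENNReal.ofReal ρ ^ s := h _ isClosed_closure ρ (diam_nonneg.trans_lt hρ)
        fun x hx y hy => (dist_le_diam_of_mem hbdd.closure hx hy).trans
          ((diam_closure t).trans_le hρ.le)

lemma ofReal_le_dimH_of_forall_measure_le [BorelSpace E] {μ : Measure E} {s : ℝ}
    (h : ∀ t, μ t ≤ ediam t ^ s) {A : Set E} (hA : μ A ≠ 0) : ENNReal.ofReal s ≤ dimH A := by
  rcases le_or_gt s 0 with hs | hs
  · simp [ENNReal.ofReal_of_nonpos hs]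
  have hle : μ ≤ μH[s] := Measure.le_hausdorffMeasure s μ 1 one_pos fun t _ => h t
  refine le_dimH_of_hausdorffMeasure_ne_zero fun h0 => hA ?_
  rw [Real.coe_toNNReal _ hs.le] at h0
  exact le_zero_iff.1 (h0 ▸ hle A)

end MassDistribution

namespace IFS

variable {ι α : Type*}

/-- `prefixComp T ω n = T (ω 0) ∘ ⋯ ∘ T (ω (n - 1))`. -/
def prefixComp (T : ι → α → α) (ω : ℕ → ι) : ℕ → α → α
  | 0 => id
  | n + 1 => prefixComp T ω n ∘ T (ω n)

variable {T : ι → α → α}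

lemma prefixComp_congr {ω ω' : ℕ → ι} {n : ℕ} (h : ω' ∈ cylinder ω n) :
    prefixComp T ω' n = prefixComp T ω n := by
  induction n with
  | zero => rfl
  | succ n ih => rw [prefixComp, prefixComp, ih (cylinder_anti ω n.le_succ h), h n n.lt_succ_self]

lemma prefixComp_add (ω : ℕ → ι) (n k : ℕ) :
    prefixComp T ω (n + k) = prefixComp T ω n ∘ prefixComp T (fun j => ω (n + j)) k := by
  induction k with
  | zero => rfl
  | succ k ih => rw [← add_assoc, prefixComp, ih]; rfl

lemma exists_prod_range_le [Finite ι] {b : ι → ℝ} (hb0 : ∀ i, 0 ≤ b i) (hb1 : ∀ i, b i < 1)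
    (ω : ℕ → ι) {r : ℝ} (hr : 0 < r) : ∃ n, ∏ k ∈ Finset.range n, b (ω k) ≤ r := by
  obtain ⟨β, hβ1, hbβ⟩ := exists_nnreal_lt_one_forall_le hb1
  obtain ⟨n, hn⟩ := exists_pow_lt_of_lt_one hr (NNReal.coe_lt_one.2 hβ1)
  refine ⟨n, le_trans ?_ hn.le⟩
  calc ∏ k ∈ Finset.range n, b (ω k) ≤ ∏ _k ∈ Finset.range n, (β : ℝ) :=
        Finset.prod_le_prod (fun k _ => hb0 _) fun k _ => hbβ _
    _ = β ^ n := by simp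

section Metric

variable [MetricSpace α]

lemma lipschitzWith_prefixComp {c : ℝ≥0} (hT : ∀ i, LipschitzWith c (T i)) (ω : ℕ → ι) (n : ℕ) :
    LipschitzWith (c ^ n) (prefixComp T ω n) := by
  induction n with
  | zero => exact LipschitzWith.id
  | succ n ih => rw [pow_succ]; exact ih.comp (hT _)

lemma prod_mul_dist_le_dist_prefixComp {b : ι → ℝ} (hb0 : ∀ i, 0 ≤ b i)
    (hb : ∀ i x y, b i * dist x y ≤ dist (T i x) (T i y)) (ω : ℕ → ι) (n : ℕ) (x y : α) :
    (∏ k ∈ Finset.range n, b (ω k)) * dist x y ≤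
      dist (prefixComp T ω n x) (prefixComp T ω n y) := by
  induction n generalizing x y with
  | zero => simp [prefixComp]
  | succ n ih =>
    calc (∏ k ∈ Finset.range (n + 1), b (ω k)) * dist x y
        = (∏ k ∈ Finset.range n, b (ω k)) * (b (ω n) * dist x y) := by
          rw [Finset.prod_range_succ, mul_assoc]
      _ ≤ (∏ k ∈ Finset.range n, b (ω k)) * dist (T (ω n) x) (T (ω n) y) := by
          gcongr
          · exact Finset.prod_nonneg fun k _ => hb0 _
          · exact hb _ x y
      _ ≤ _ := ih _ _

end Metric

section Coding

variable [MetricSpace α] [CompleteSpace α] [Nonempty α] {c : ℝ≥0}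

/-- The point with address `ω`; for contractions the limit does not depend on the starting
point. -/
noncomputable def coding (T : ι → α → α) (ω : ℕ → ι) : α :=
  limUnder atTop fun n => prefixComp T ω n (Classical.arbitrary α)

variable [Finite ι]

lemma tendstoUniformly_prefixComp_coding (hT : ∀ i, LipschitzWith c (T i)) (hc : c < 1) :
    TendstoUniformly (fun n ω => prefixComp T ω n (Classical.arbitrary α)) (coding T) atTop := by
  set x₀ := Classical.arbitrary α
  obtain ⟨C, hC⟩ := Finite.bddAbove_range fun i => dist x₀ (T i x₀)
  have hstep : ∀ ω n, dist (prefixComp T ω n x₀) (prefixComp T ω (n + 1) x₀) ≤ C * c ^ n :=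
    fun ω n => calc
      _ ≤ c ^ n * dist x₀ (T (ω n) x₀) := (lipschitzWith_prefixComp hT ω n).dist_le_mul _ _
      _ ≤ C * c ^ n := by
        rw [mul_comm]; gcongr; exact hC (mem_range_self _)
  have hlim : ∀ ω, Tendsto (fun n => prefixComp T ω n x₀) atTop (𝓝 (coding T ω)) :=
    fun ω => (cauchySeq_of_le_geometric _ C hc (hstep ω)).tendsto_limUnder
  have hbound : Tendsto (fun n => C * c ^ n / (1 - c)) atTop (𝓝 0) := by
    simpa using ((tendsto_pow_atTop_nhds_zero_of_lt_one c.2 hc).const_mul C).div_const (1 - c)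
  rw [Metric.tendstoUniformly_iff]
  intro ε hε
  filter_upwards [hbound.eventually (gt_mem_nhds hε)] with n hn ω
  rw [dist_comm]
  exact (dist_le_of_le_geometric_of_tendsto _ C hc (hstep ω) (hlim ω) n).trans_lt hn

lemma continuous_coding [TopologicalSpace ι] [DiscreteTopology ι]
    (hT : ∀ i, LipschitzWith c (T i)) (hc : c < 1) : Continuous (coding T) := by
  refine (tendstoUniformly_prefixComp_coding hT hc).continuous (Frequently.of_forall fun n => ?_)
  refine continuous_iff_continuousAt.2 fun ω => tendsto_nhds_of_eventually_eq ?_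
  filter_upwards [(isOpen_cylinder _ ω n).mem_nhds (self_mem_cylinder ω n)] with ω' hω'
  rw [prefixComp_congr hω']

lemma coding_eq_prefixComp (hT : ∀ i, LipschitzWith c (T i)) (hc : c < 1)
    (ω : ℕ → ι) (n : ℕ) :
    coding T ω = prefixComp T ω n (coding T fun j => ω (n + j)) := by
  have hlim := (tendstoUniformly_prefixComp_coding hT hc).tendsto_at
  have hshift : Tendsto (fun k => n + k) atTop atTop := by
    simpa only [add_comm] using tendsto_add_atTop_nat n
  refine tendsto_nhds_unique ((hlim ω).comp hshift) ?_
  simp_rw [Function.comp_def, prefixComp_add]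
  exact ((lipschitzWith_prefixComp hT ω n).continuous.tendsto _).comp (hlim _)

lemma mem_cylinder_of_dist_coding_le (hT : ∀ i, LipschitzWith c (T i)) (hc : c < 1)
    {b : ι → ℝ} (hb0 : ∀ i, 0 ≤ b i) (hb : ∀ i x y, b i * dist x y ≤ dist (T i x) (T i y))
    {δ : ℝ} (hδ : 0 < δ) (hsep : ∀ i j, i ≠ j → ∀ x y, δ ≤ dist (T i x) (T j y))
    {ω ω' : ℕ → ι} {n : ℕ} {r : ℝ} (hn : ∀ k < n, r < ∏ j ∈ Finset.range k, b (ω j))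
    (hd : dist (coding T ω) (coding T ω') ≤ δ * r) : ω' ∈ cylinder ω n := by
  by_contra hω'
  have hne : ω' ≠ ω := fun h => hω' (h ▸ self_mem_cylinder ω n)
  set K := firstDiff ω' ω
  have hK : K < n := by
    by_contra! h
    exact hω' ((mem_cylinder_iff_le_firstDiff hne n).2 h)
  -- the two points are images under the common map `prefixComp T ω K` of points of the
  -- `δ`-separated pieces `range (T (ω K))` and `range (T (ω' K))`
  have hcod : ∀ η : ℕ → ι, coding T η =
      prefixComp T η K (T (η K) (coding T fun j => η (K + 1 + j))) :=
    fun η => coding_eq_prefixComp hT hc η (K + 1)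
  have hpref : prefixComp T ω' K = prefixComp T ω K :=
    prefixComp_congr (mem_cylinder_firstDiff ω' ω)
  have hprod : 0 ≤ ∏ j ∈ Finset.range K, b (ω j) := Finset.prod_nonneg fun j _ => hb0 _
  have := calc δ * r
      < (∏ j ∈ Finset.range K, b (ω j)) * δ := by rw [mul_comm]; gcongr; exact hn K hK
    _ ≤ (∏ j ∈ Finset.range K, b (ω j)) *
          dist (T (ω K) (coding T fun j => ω (K + 1 + j)))
            (T (ω' K) (coding T fun j => ω' (K + 1 + j))) := by
        gcongr; exact hsep _ _ (apply_firstDiff_ne hne).symm _ _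
    _ ≤ dist (coding T ω) (coding T ω') := by
        rw [hcod ω, hcod ω', hpref]
        exact prod_mul_dist_le_dist_prefixComp hb0 hb ω K _ _
  linarith

lemma infinitePi_preimage_coding_le [MeasurableSpace ι] [MeasurableSingletonClass ι]
    (hT : ∀ i, LipschitzWith c (T i)) (hc : c < 1)
    {b : ι → ℝ} (hb0 : ∀ i, 0 ≤ b i) (hb1 : ∀ i, b i < 1)
    (hb : ∀ i x y, b i * dist x y ≤ dist (T i x) (T i y))
    {δ : ℝ} (hδ : 0 < δ) (hsep : ∀ i j, i ≠ j → ∀ x y, δ ≤ dist (T i x) (T j y))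
    {s : ℝ} (hs : 0 ≤ s) (P : Measure ι) [IsProbabilityMeasure P]
    (hP : ∀ i, P {i} = ENNReal.ofReal (b i) ^ s)
    {V : Set α} {r : ℝ} (hr : 0 < r) (hV : ∀ x ∈ V, ∀ y ∈ V, dist x y ≤ δ * r) :
    Measure.infinitePi (fun _ : ℕ => P) (coding T ⁻¹' V) ≤ ENNReal.ofReal r ^ s := by
  classical
  rcases (coding T ⁻¹' V).eq_empty_or_nonempty with hempty | ⟨ω, hω⟩
  · simp [hempty]
  have hex := exists_prod_range_le hb0 hb1 ω hr
  calc Measure.infinitePi (fun _ : ℕ => P) (coding T ⁻¹' V)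
      ≤ Measure.infinitePi (fun _ : ℕ => P) (cylinder ω (Nat.find hex)) :=
        measure_mono fun ω' hω' => mem_cylinder_of_dist_coding_le hT hc hb0 hb hδ hsep
          (fun k hk => not_le.1 (Nat.find_min hex hk)) (hV _ hω _ hω')
    _ = ENNReal.ofReal (∏ k ∈ Finset.range (Nat.find hex), b (ω k)) ^ s := by
        rw [cylinder_eq_pi, Measure.infinitePi_pi _ fun _ _ => measurableSet_singleton _,
          ENNReal.ofReal_prod_of_nonneg fun _ _ => hb0 _, ← ENNReal.prod_rpow_of_nonneg hs]
        simp_rw [hP]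
    _ ≤ ENNReal.ofReal r ^ s := by gcongr; exact Nat.find_spec hex

end Coding

section Dimension

variable [Fintype ι] [MetricSpace α] [CompactSpace α] [Nonempty α]

theorem ofReal_le_dimH_univ {c : ℝ≥0} (hT : ∀ i, LipschitzWith c (T i))
    (hc : c < 1) {b : ι → ℝ} (hb : ∀ i, b i ∈ Ioo 0 1)
    (hbT : ∀ i x y, b i * dist x y ≤ dist (T i x) (T i y))
    (hdisj : Pairwise (Disjoint on fun i => range (T i))) {s : ℝ} (hs : 0 < s)
    (hsum : ∑ i, b i ^ s = 1) : ENNReal.ofReal s ≤ dimH (univ : Set α) := by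
  borelize α
  let : TopologicalSpace ι := ⊥
  have : DiscreteTopology ι := ⟨rfl⟩
  let : MeasurableSpace ι := ⊤
  obtain ⟨δ, hδ, hsep⟩ := exists_pos_forall_le_dist_of_pairwise_disjoint
    (fun i => isCompact_range (hT i).continuous) hdisj
  replace hsep : ∀ i j, i ≠ j → ∀ x y, δ ≤ dist (T i x) (T j y) :=
    fun i j hij x y => hsep i j hij _ (mem_range_self x) _ (mem_range_self y)
  let P : Measure ι := (PMF.ofFintype (fun i => ENNReal.ofReal (b i) ^ s) (by
    simp_rw [ENNReal.ofReal_rpow_of_nonneg (hb _).1.le hs.le]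
    rw [← ENNReal.ofReal_sum_of_nonneg fun i _ => Real.rpow_nonneg (hb i).1.le s, hsum,
      ENNReal.ofReal_one])).toMeasure
  have hP : ∀ i, P {i} = ENNReal.ofReal (b i) ^ s := fun i =>
    PMF.toMeasure_apply_singleton _ _ (measurableSet_singleton i)
  let ν := Measure.infinitePi fun _ : ℕ => P
  have hπ : Measurable (coding T) := (continuous_coding hT hc).measurable
  refine ofReal_le_dimH_of_forall_measure_le (μ := ENNReal.ofReal δ ^ s • ν.map (coding T))
    (measure_le_ediam_rpow hs fun V hV ρ hρ hVρ => ?_) ?_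
  · have hVδ : ∀ x ∈ V, ∀ y ∈ V, dist x y ≤ δ * (ρ / δ) :=
      fun x hx y hy => (mul_div_cancel₀ ρ hδ.ne').symm ▸ hVρ _ hx _ hy
    rw [Measure.smul_apply, Measure.map_apply hπ hV.measurableSet, smul_eq_mul]
    calc ENNReal.ofReal δ ^ s * ν (coding T ⁻¹' V)
        ≤ ENNReal.ofReal δ ^ s * ENNReal.ofReal (ρ / δ) ^ s := by
          gcongr
          exact infinitePi_preimage_coding_le hT hc (fun i => (hb i).1.le) (fun i => (hb i).2)
            hbT hδ hsep hs.le P hP (by positivity) hVδ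
      _ = ENNReal.ofReal ρ ^ s := by
          rw [← ENNReal.mul_rpow_of_nonneg _ _ hs.le, ← ENNReal.ofReal_mul hδ.le,
            mul_div_cancel₀ ρ hδ.ne']
  · rw [Measure.smul_apply, Measure.map_apply hπ MeasurableSet.univ, preimage_univ,
      measure_univ, smul_eq_mul, mul_one]
    exact (ENNReal.rpow_pos (ENNReal.ofReal_pos.2 hδ) ENNReal.ofReal_ne_top).ne'

end Dimension

end IFS

theorem stmt7_general (m : ℕ) (D : Set ℂ)
    (T : Fin m → ℂ → ℂ)
    (hcontr : ∀ i, ∃ c ∈ Set.Ioo (0:ℝ) 1, ∀ z ∈ D, ∀ w ∈ D,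
      dist (T i z) (T i w) ≤ c * dist z w)
    (hdisj : ∀ i j, i ≠ j → Disjoint (T i '' D) (T j '' D))
    (b : Fin m → ℝ) (hb : ∀ i, b i ∈ Set.Ioo (0:ℝ) 1)
    (hlow : ∀ i, ∀ z ∈ D, ∀ w ∈ D, b i * dist z w ≤ dist (T i z) (T i w))
    (s : ℝ) (hs : 0 < s) (hsum : ∑ i, b i ^ s = 1)
    (X : Set ℂ) (hXne : X.Nonempty) (hXc : IsCompact X) (hXD : X ⊆ D)
    (hXinv : X = ⋃ i, T i '' X) :
    ENNReal.ofReal s ≤ dimH X := by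
  have : CompactSpace X := isCompact_iff_compactSpace.1 hXc
  have : Nonempty X := hXne.to_subtype
  have hTX : ∀ i, MapsTo (T i) X X := fun i x hx =>
    hXinv ▸ mem_iUnion.2 ⟨i, mem_image_of_mem _ hx⟩
  choose c hc hcD using hcontr
  obtain ⟨c', hc'1, hcc'⟩ := exists_nnreal_lt_one_forall_le fun i => (hc i).2
  have hTXc' : ∀ i, LipschitzWith c' (hTX i).restrict := fun i =>
    LipschitzWith.of_dist_le_mul fun x y => (hcD i x (hXD x.2) y (hXD y.2)).trans
      (mul_le_mul_of_nonneg_right (hcc' i) dist_nonneg)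
  have hrange : ∀ i, range (hTX i).restrict ⊆ Subtype.val ⁻¹' (T i '' D) := fun i => by
    rintro _ ⟨x, rfl⟩
    exact ⟨x, hXD x.2, rfl⟩
  have hdisjX : Pairwise (Disjoint on fun i => range (hTX i).restrict) := fun i j hij =>
    ((hdisj i j hij).preimage Subtype.val).mono (hrange i) (hrange j)
  have hdim := IFS.ofReal_le_dimH_univ hTXc' hc'1 hb
    (fun i x y => hlow i x (hXD x.2) y (hXD y.2)) hdisjX hs hsum
  rwa [← isometry_subtype_coe.dimH_image, image_univ, Subtype.range_coe] at hdim

/-- Lower bound for the Hausdorff dimension of the limit set of an iterated function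
scheme of contractions with disjoint images and expansion constants `b_i`:
if `Σ b_i^s = 1` then `dim X ≥ s`. -/
theorem stmt7 (m : ℕ) (hm : 0 < m) (D : Set ℂ) (hD : IsCompact D)
    (T : Fin m → ℂ → ℂ) (hmaps : ∀ i, Set.MapsTo (T i) D D)
    (hcontr : ∀ i, ∃ c ∈ Set.Ioo (0:ℝ) 1, ∀ z ∈ D, ∀ w ∈ D,
      dist (T i z) (T i w) ≤ c * dist z w)
    (hdisj : ∀ i j, i ≠ j → Disjoint (T i '' D) (T j '' D))
    (b : Fin m → ℝ) (hb : ∀ i, b i ∈ Set.Ioo (0:ℝ) 1)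
    (hlow : ∀ i, ∀ z ∈ D, ∀ w ∈ D, b i * dist z w ≤ dist (T i z) (T i w))
    (s : ℝ) (hs : 0 < s) (hsum : ∑ i, b i ^ s = 1)
    (X : Set ℂ) (hXne : X.Nonempty) (hXc : IsCompact X) (hXD : X ⊆ D)
    (hXinv : X = ⋃ i, T i '' X) :
    ENNReal.ofReal s ≤ dimH X :=
  stmt7_general m D T hcontr hdisj b hb hlow s hs hsum X hXne hXc hXD hXinv
end
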